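/- arXiv:1311.3214 — 2 statements merged into one kernel-verified Lean document; each statement's English description precedes it below -/
import Mathlib

section
/- Let r > 1, N ≥ 2, and 0 ≤ d < 1 with d ≠ 1/2. Define γ(d) = (r(1-d)+d)/((1-d)+rd) and ρ(d) = (1 - γ(d))/(1 - γ(d)^N). Then ρ(d) < ρ(1), where ρ(1) = (1 - 1/r)/(1 - 1/r^N). -/
/-!
Writing `γ` for the fitness ratio, `(1 - γ) / (1 - γ ^ N) = 1 / (1 + γ + ⋯ + γ ^ (N - 1))` whenever
`γ ≠ 1`, and `ρ(1)` is this expression at `γ = 1 / r`. Since `(r ^ 2 - 1) (1 - d) > 0`, the ratio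
`γ(d)` exceeds `1 / r` for `d < 1`, so the geometric sum at `γ(d)` is strictly larger and its
reciprocal strictly smaller.
-/

open Finset

lemma one_sub_div_one_sub_pow_eq_inv_geom_sum {K : Type*} [Field K] {g : K} (hg : g ≠ 1)
    (N : ℕ) : (1 - g) / (1 - g ^ N) = (∑ i ∈ range N, g ^ i)⁻¹ := by
  rw [← mul_neg_geom_sum, div_mul_cancel_left₀ (sub_ne_zero.mpr hg.symm)]

lemma geom_sum_lt_geom_sum {a b : ℝ} (ha : 0 ≤ a) (hab : a < b) {N : ℕ} (hN : 2 ≤ N) :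
    ∑ i ∈ range N, a ^ i < ∑ i ∈ range N, b ^ i :=
  sum_lt_sum (fun i _ => pow_le_pow_left₀ ha hab.le i)
    ⟨1, mem_range.mpr (by omega), by simpa using hab⟩

section FitnessRatio

variable {r d : ℝ}

lemma fitnessRatio_ne_one (hr : 1 < r) (hdhalf : d ≠ 1 / 2) :
    (r * (1 - d) + d) / ((1 - d) + r * d) ≠ 1 := by
  intro h
  have hden : (1 - d) + r * d ≠ 0 := by
    rintro hzero
    simp [hzero] at h
  have hfactor : (r - 1) * (1 - 2 * d) = 0 := by
    linear_combination (div_eq_one_iff_eq hden).mp h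
  rcases mul_eq_zero.mp hfactor with hr1 | hd
  · linarith
  · exact hdhalf (by linarith)

lemma inv_lt_fitnessRatio (hr : 1 < r) (hd0 : 0 ≤ d) (hd1 : d < 1) :
    r⁻¹ < (r * (1 - d) + d) / ((1 - d) + r * d) := by
  have hden : 0 < (1 - d) + r * d := by nlinarith
  rw [inv_eq_one_div, div_lt_div_iff₀ (by linarith) hden]
  nlinarith [mul_pos (show 0 < r * r - 1 by nlinarith) (sub_pos.mpr hd1)]

end FitnessRatio

/-- For `r > 1`, `N ≥ 2`, and `0 ≤ d < 1` with `d ≠ 1/2`, the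
mean-field fixation probability `ρ(d) = (1-γ(d))/(1-γ(d)^N)` with
`γ(d) = (r(1-d)+d)/((1-d)+rd)` satisfies `ρ(d) < ρ(1) = (1-1/r)/(1-1/r^N)`. -/
theorem stmt_2 (r : ℝ) (hr : 1 < r) (N : ℕ) (hN : 2 ≤ N)
    (d : ℝ) (hd0 : 0 ≤ d) (hd1 : d < 1) (hdhalf : d ≠ 1 / 2)
    (γ : ℝ → ℝ) (hγ : ∀ x, γ x = (r * (1 - x) + x) / ((1 - x) + r * x))
    (ρ : ℝ → ℝ) (hρ : ∀ x, ρ x = (1 - γ x) / (1 - γ x ^ N)) :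
    ρ d < (1 - 1 / r) / (1 - 1 / r ^ N) := by
  have hr0 : 0 < r⁻¹ := inv_pos.mpr (by linarith)
  have hrinv : r⁻¹ ≠ 1 := inv_ne_one.mpr hr.ne'
  rw [hρ, hγ, one_div, one_div, ← inv_pow, one_sub_div_one_sub_pow_eq_inv_geom_sum hrinv,
    one_sub_div_one_sub_pow_eq_inv_geom_sum (fitnessRatio_ne_one hr hdhalf)]
  exact inv_strictAnti₀ (geom_sum_pos hr0.le (by omega))
    (geom_sum_lt_geom_sum hr0.le (inv_lt_fitnessRatio hr hd0 hd1) hN)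
end

section
/- Let G be a finite connected bipartite graph with proper background 2-colouring, undergoing the birth-death process with fecundity advantage r ≥ 1 and uniform offspring dispersal. For a set M ⊆ V(G) of vertices initially occupied by red individuals, the fixation probability of red equals (Σ_{i∈M} 1/d_i)/(Σ_{j∈V(G)} 1/d_j), where d_i is the degree of vertex v_i; in particular it is independent of r. -/
/-!
The total reproductive value `φ S = ∑_{x red} 1 / d_x` of the red individuals is a martingale of
the birth–death chain. A red `v` replacing a blue neighbour `w` raises `φ` by `1 / d_w` and happens
with probability `f_v / (F d_v)`; the reverse replacement lowers `φ` by `1 / d_v` and happens with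
probability `f_w / (F d_w)`. In a properly coloured graph two neighbours of different colour are
both on or both off their background colour, so `f_v = f_w` and the two contributions cancel.
Connectivity makes one of the two monochromatic (absorbing) states reachable from every state, so
the transient probability mass decays geometrically, and in the limit the martingale identity
reads `P(fixation from S) · φ(all red) = φ S`.
-/

open Filter Matrix Finset

theorem tendsto_zero_of_antitone_of_add_le_mul {u : ℕ → ℝ} {q : ℝ} {N : ℕ} (hu : Antitone u)
    (hu0 : ∀ n, 0 ≤ u n) (hq : q < 1) (h : ∀ n, u (n + N) ≤ q * u n) :
    Tendsto u atTop (nhds 0) := by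
  obtain ⟨L, hL⟩ : ∃ L, Tendsto u atTop (nhds L) :=
    ⟨_, tendsto_atTop_ciInf hu ⟨0, by rintro _ ⟨n, rfl⟩; exact hu0 n⟩⟩
  have hL0 : 0 ≤ L := ge_of_tendsto' hL hu0
  have hLq : L ≤ q * L :=
    le_of_tendsto_of_tendsto' (hL.comp (tendsto_add_atTop_nat N)) (hL.const_mul q) h
  rwa [show L = 0 by nlinarith] at hL

namespace Matrix

variable {X : Type*} [Fintype X] [DecidableEq X] {P : Matrix X X ℝ}

theorem pow_row_eq_single_of_row_eq_single {a : X} (ha : P a = Pi.single a 1) (n : ℕ) :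
    (P ^ n) a = Pi.single a 1 := by
  induction n with
  | zero => ext j; simp [one_apply, Pi.single_apply, eq_comm]
  | succ n ih => ext j; simp [pow_succ, mul_apply, ih, ha, Pi.single_apply]

theorem pow_mulVec_of_mulVec_eq {φ : X → ℝ} (hφ : P *ᵥ φ = φ) (n : ℕ) : P ^ n *ᵥ φ = φ := by
  induction n with
  | zero => simp
  | succ n ih => rw [pow_succ', ← mulVec_mulVec, ih, hφ]

variable {A : Finset X}

theorem sum_compl_pow_add_apply (n m : ℕ) (i : X) :
    ∑ j ∈ Aᶜ, (P ^ (n + m)) i j = ∑ k, (P ^ n) i k * ∑ j ∈ Aᶜ, (P ^ m) k j := by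
  simp only [pow_add, mul_apply, mul_sum]
  exact sum_comm

theorem sum_compl_pow_apply_of_mem (hA : ∀ a ∈ A, P a = Pi.single a 1) {a : X} (ha : a ∈ A)
    (m : ℕ) : ∑ j ∈ Aᶜ, (P ^ m) a j = 0 := by
  simp [pow_row_eq_single_of_row_eq_single (hA a ha), sum_pi_single', ha]

theorem sum_compl_pow_add_apply_le (hP : P ∈ rowStochastic ℝ X)
    (hA : ∀ a ∈ A, P a = Pi.single a 1) {m : ℕ} {q : ℝ}
    (hq : ∀ k ∉ A, ∑ j ∈ Aᶜ, (P ^ m) k j ≤ q) (n : ℕ) (i : X) :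
    ∑ j ∈ Aᶜ, (P ^ (n + m)) i j ≤ q * ∑ j ∈ Aᶜ, (P ^ n) i j := by
  have hPn := pow_mem hP n
  rw [sum_compl_pow_add_apply, ← sum_add_sum_compl A, mul_sum,
    sum_eq_zero fun a ha => by rw [sum_compl_pow_apply_of_mem hA ha, mul_zero], zero_add]
  refine sum_le_sum fun k hk => ?_
  rw [mul_comm q]
  exact mul_le_mul_of_nonneg_left (hq k (mem_compl.mp hk)) (nonneg_of_mem_rowStochastic hPn)

theorem sum_compl_pow_apply_le_one (hP : P ∈ rowStochastic ℝ X) (m : ℕ) (k : X) :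
    ∑ j ∈ Aᶜ, (P ^ m) k j ≤ 1 := by
  have hPm := pow_mem hP m
  calc ∑ j ∈ Aᶜ, (P ^ m) k j ≤ ∑ j, (P ^ m) k j :=
        sum_le_univ_sum_of_nonneg fun j => nonneg_of_mem_rowStochastic hPm
    _ = 1 := sum_row_of_mem_rowStochastic hPm k


theorem tendsto_sum_compl_pow_apply (hP : P ∈ rowStochastic ℝ X)
    (hA : ∀ a ∈ A, P a = Pi.single a 1) {N : ℕ} (hreach : ∀ i, ∃ a ∈ A, 0 < (P ^ N) i a)
    (i : X) : Tendsto (fun n => ∑ j ∈ Aᶜ, (P ^ n) i j) atTop (nhds 0) := by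
  have : Nonempty X := ⟨i⟩
  obtain ⟨k₀, hk₀⟩ := Finite.exists_max fun k => ∑ j ∈ Aᶜ, (P ^ N) k j
  have hq : ∑ j ∈ Aᶜ, (P ^ N) k₀ j < 1 := by
    obtain ⟨a, ha, hpos⟩ := hreach k₀
    have hPN := pow_mem hP N
    have hle : (P ^ N) k₀ a ≤ ∑ j ∈ A, (P ^ N) k₀ j :=
      single_le_sum (f := (P ^ N) k₀) (fun j _ => nonneg_of_mem_rowStochastic hPN) ha
    have := sum_add_sum_compl A ((P ^ N) k₀)
    rw [sum_row_of_mem_rowStochastic hPN] at this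
    linarith
  refine tendsto_zero_of_antitone_of_add_le_mul ?_
    (fun n => sum_nonneg fun j _ => nonneg_of_mem_rowStochastic (pow_mem hP n)) hq
    (fun n => sum_compl_pow_add_apply_le hP hA (fun k _ => hk₀ k) n i)
  refine antitone_nat_of_succ_le fun n => ?_
  simpa using sum_compl_pow_add_apply_le (m := 1) hP hA
    (fun k _ => sum_compl_pow_apply_le_one hP 1 k) n i

theorem tendsto_pow_apply_of_notMem (hP : P ∈ rowStochastic ℝ X)
    (hA : ∀ a ∈ A, P a = Pi.single a 1) {N : ℕ} (hreach : ∀ i, ∃ a ∈ A, 0 < (P ^ N) i a)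
    (i : X) {j : X} (hj : j ∉ A) : Tendsto (fun n => (P ^ n) i j) atTop (nhds 0) :=
  squeeze_zero (fun n => nonneg_of_mem_rowStochastic (pow_mem hP n))
    (fun n => single_le_sum (f := (P ^ n) i)
      (fun _ _ => nonneg_of_mem_rowStochastic (pow_mem hP n)) (mem_compl.mpr hj))
    (tendsto_sum_compl_pow_apply hP hA hreach i)

theorem tendsto_sum_pow_apply_mul_of_mulVec_eq (hP : P ∈ rowStochastic ℝ X)
    (hA : ∀ a ∈ A, P a = Pi.single a 1) {N : ℕ} (hreach : ∀ i, ∃ a ∈ A, 0 < (P ^ N) i a)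
    {φ : X → ℝ} (hφ : P *ᵥ φ = φ) (i : X) :
    Tendsto (fun n => ∑ j ∈ A, (P ^ n) i j * φ j) atTop (nhds (φ i)) := by
  have hsplit (n : ℕ) : ∑ j ∈ A, (P ^ n) i j * φ j = φ i - ∑ j ∈ Aᶜ, (P ^ n) i j * φ j := by
    rw [eq_sub_iff_add_eq, sum_add_sum_compl]
    exact congrFun (pow_mulVec_of_mulVec_eq hφ n) i
  have htrans : Tendsto (fun n => ∑ j ∈ Aᶜ, (P ^ n) i j * φ j) atTop (nhds 0) := by
    simpa using tendsto_finsetSum Aᶜ fun j hj =>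
      (tendsto_pow_apply_of_notMem hP hA hreach i (mem_compl.mp hj)).mul_const (φ j)
  simpa [hsplit] using htrans.const_sub (φ i)

theorem tendsto_pow_apply_of_mulVec_eq (hP : P ∈ rowStochastic ℝ X) {t b : X}
    (ht : P t = Pi.single t 1) (hb : P b = Pi.single b 1) {N : ℕ}
    (hreach : ∀ i, 0 < (P ^ N) i t ∨ 0 < (P ^ N) i b) {φ : X → ℝ} (hφ : P *ᵥ φ = φ)
    (hφt : φ t ≠ 0) (hφb : φ b = 0) (i : X) :
    Tendsto (fun n => (P ^ n) i t) atTop (nhds (φ i / φ t)) := by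
  have htb : t ≠ b := by rintro rfl; exact hφt hφb
  have hlim := tendsto_sum_pow_apply_mul_of_mulVec_eq (A := {t, b}) hP
    (by simpa using And.intro ht hb) (by simpa [or_comm] using hreach) hφ i
  simpa [sum_pair htb, hφb, hφt] using hlim.div_const (φ t)

end Matrix

namespace SimpleGraph

variable {V : Type*} [Fintype V] {G : SimpleGraph V} [DecidableRel G.Adj]

theorem sum_sum_neighborFinset_eq_zero_of_antisymm (g : V → V → ℝ)
    (hg : ∀ v w, G.Adj v w → g w v = -g v w) : ∑ v, ∑ w ∈ G.neighborFinset v, g v w = 0 := by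
  have hneg : ∑ v, ∑ w ∈ G.neighborFinset v, g v w = ∑ v, ∑ w ∈ G.neighborFinset v, -g v w := by
    simp only [neighborFinset_eq_filter, sum_filter]
    rw [sum_comm]
    refine sum_congr rfl fun v _ => sum_congr rfl fun w _ => ?_
    by_cases h : G.Adj v w
    · rw [if_pos h.symm, if_pos h, hg v w h]
    · rw [if_neg fun h' => h h'.symm, if_neg h]
  simp only [sum_neg_distrib] at hneg
  linarith

theorem sum_birthDeath_weights [Nonempty V] {f : (V → Bool) → V → ℝ} (hf : ∀ S v, 0 < f S v)
    (hdeg : ∀ v, 0 < G.degree v) (S : V → Bool) :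
    ∑ v : V, ∑ _w ∈ G.neighborFinset v,
      (f S v / ∑ u : V, f S u) * (1 / (G.degree v : ℝ)) = 1 := by
  have hF : (∑ u : V, f S u) ≠ 0 :=
    (sum_pos (fun u _ => hf S u) univ_nonempty).ne'
  have hrow (v : V) : ∑ _w ∈ G.neighborFinset v,
      (f S v / ∑ u : V, f S u) * (1 / (G.degree v : ℝ)) = f S v / ∑ u : V, f S u := by
    have : (G.degree v : ℝ) ≠ 0 := by exact_mod_cast (hdeg v).ne'
    rw [sum_const, card_neighborFinset_eq_degree, nsmul_eq_mul]
    field_simp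
  simp_rw [hrow, ← sum_div, div_self hF]

variable (G) in
/-- The reproductive value `∑_{x red} ρ_neutral x` of the red population, scaled by
`∑ j, 1 / d j`, where `ρ_neutral x = (1 / d x) / ∑ j, 1 / d j`. -/
noncomputable def redReproductiveValue (S : V → Bool) : ℝ :=
  ∑ x : V, if S x then 1 / (G.degree x : ℝ) else 0

variable [DecidableEq V]

variable (G) in
noncomputable def birthDeathMatrix (f : (V → Bool) → V → ℝ) :
    Matrix (V → Bool) (V → Bool) ℝ :=
  fun S T => ∑ v : V, ∑ w ∈ G.neighborFinset v,
    (f S v / ∑ u : V, f S u) * (1 / (G.degree v : ℝ)) *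
      (if T = Function.update S w (S v) then 1 else 0)

variable {f : (V → Bool) → V → ℝ}

theorem birthDeathMatrix_mulVec_apply (g : (V → Bool) → ℝ) (S : V → Bool) :
    (G.birthDeathMatrix f *ᵥ g) S = ∑ v : V, ∑ w ∈ G.neighborFinset v,
      (f S v / ∑ u : V, f S u) * (1 / (G.degree v : ℝ)) * g (Function.update S w (S v)) := by
  simp only [mulVec, dotProduct, birthDeathMatrix, sum_mul]
  rw [sum_comm]
  refine sum_congr rfl fun v _ => ?_
  rw [sum_comm]
  simp [sum_ite_eq']

theorem redReproductiveValue_update (S : V → Bool) (w : V) (c : Bool) :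
    G.redReproductiveValue (Function.update S w c) = G.redReproductiveValue S +
      ((if c then 1 / (G.degree w : ℝ) else 0) - if S w then 1 / (G.degree w : ℝ) else 0) := by
  rw [← sub_eq_iff_eq_add', redReproductiveValue, redReproductiveValue, ← sum_sub_distrib,
    sum_eq_single w (fun x _ hx => by rw [Function.update_of_ne hx, sub_self])
      (fun h => absurd (mem_univ w) h), Function.update_self]

variable [Nonempty V]

theorem birthDeathMatrix_mem_rowStochastic (hf : ∀ S v, 0 < f S v)
    (hdeg : ∀ v, 0 < G.degree v) : G.birthDeathMatrix f ∈ rowStochastic ℝ (V → Bool) := by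
  refine mem_rowStochastic.mpr ⟨fun S T => ?_, funext fun S => ?_⟩
  · have hF := sum_pos (fun u _ => hf S u) univ_nonempty
    exact sum_nonneg fun v _ => sum_nonneg fun w _ => by
      have := hf S v
      positivity
  · simpa [birthDeathMatrix_mulVec_apply] using sum_birthDeath_weights hf hdeg S

theorem birthDeathMatrix_row_const (hf : ∀ S v, 0 < f S v) (hdeg : ∀ v, 0 < G.degree v)
    (c : Bool) : G.birthDeathMatrix f (fun _ => c) = Pi.single (fun _ => c) 1 := by
  ext T
  simp only [birthDeathMatrix, Function.update_eq_self_iff.mpr rfl, Pi.single_apply]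
  split_ifs
  · simpa only [mul_one] using sum_birthDeath_weights hf hdeg _
  · simp only [mul_zero, sum_const_zero]

theorem birthDeathMatrix_update_pos (hf : ∀ S v, 0 < f S v) (S : V → Bool) {v w : V}
    (hvw : G.Adj v w) : 0 < G.birthDeathMatrix f S (Function.update S w (S v)) := by
  have hF := sum_pos (fun u _ => hf S u) univ_nonempty
  have hterm_nonneg (v' : V) (w' : V) : 0 ≤ (f S v' / ∑ u : V, f S u) *
      (1 / (G.degree v' : ℝ)) *
        (if Function.update S w (S v) = Function.update S w' (S v') then 1 else 0) := by
    have := hf S v'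
    positivity
  refine sum_pos' (fun v' _ => sum_nonneg fun w' _ => hterm_nonneg v' w')
    ⟨v, mem_univ v, sum_pos' (fun w' _ => hterm_nonneg v w')
      ⟨w, (G.mem_neighborFinset v w).mpr hvw, ?_⟩⟩
  have := hf S v
  have : (0 : ℝ) < G.degree v := by exact_mod_cast hvw.degree_pos_left
  simp only [if_true]
  positivity

theorem birthDeathMatrix_mulVec_redReproductiveValue (hf : ∀ S v, 0 < f S v)
    (hdeg : ∀ v, 0 < G.degree v)
    (hfair : ∀ S v w, G.Adj v w → S v ≠ S w → f S v = f S w) :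
    G.birthDeathMatrix f *ᵥ G.redReproductiveValue = G.redReproductiveValue := by
  funext S
  set c : V → ℝ := fun v => (f S v / ∑ u : V, f S u) * (1 / (G.degree v : ℝ))
  set g : V → V → ℝ := fun v w =>
    c v * ((if S v then 1 / (G.degree w : ℝ) else 0) - if S w then 1 / (G.degree w : ℝ) else 0)
  have hg : ∀ v w, G.Adj v w → g w v = -g v w := by
    intro v w hvw
    by_cases hS : S v = S w
    · simp [g, hS]
    · simp only [g, c, hfair S v w hvw hS]
      cases hv : S v <;> cases hw : S w <;> simp_all <;> ring
  calc (G.birthDeathMatrix f *ᵥ G.redReproductiveValue) S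
      = (∑ v, ∑ _w ∈ G.neighborFinset v, c v) * G.redReproductiveValue S +
          ∑ v, ∑ w ∈ G.neighborFinset v, g v w := by
        simp only [birthDeathMatrix_mulVec_apply, redReproductiveValue_update, sum_mul,
          mul_add, sum_add_distrib, c, g]
    _ = G.redReproductiveValue S := by
        rw [sum_birthDeath_weights hf hdeg, sum_sum_neighborFinset_eq_zero_of_antisymm g hg,
          one_mul, add_zero]

theorem pow_birthDeathMatrix_apply_allTrue_pos (hG : G.Preconnected) (hf : ∀ S v, 0 < f S v)
    (hdeg : ∀ v, 0 < G.degree v) (n : ℕ) (S : V → Bool) (hS : ∃ v, S v = true)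
    (hn : (univ.filter fun v => S v = false).card ≤ n) :
    0 < (G.birthDeathMatrix f ^ n) S (fun _ => true) := by
  have hP := birthDeathMatrix_mem_rowStochastic hf hdeg (G := G)
  induction n generalizing S with
  | zero =>
    have hT : ∀ v, S v = true := by simpa using hn
    obtain rfl : S = fun _ => true := funext hT
    simp
  | succ n ih =>
    obtain ⟨v₀, hv₀⟩ := hS
    by_cases hT : ∀ w, S w = true
    · obtain rfl : S = fun _ => true := funext hT
      simp [pow_row_eq_single_of_row_eq_single (birthDeathMatrix_row_const hf hdeg true)]
    obtain ⟨w₀, hw₀⟩ := not_forall.mp hT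
    obtain ⟨p⟩ := hG v₀ w₀
    obtain ⟨d, -, hd₁, hd₂⟩ := p.exists_boundary_dart {x | S x = true} hv₀ hw₀
    simp only [Set.mem_ofPred_eq, Bool.not_eq_true] at hd₁ hd₂
    set S' := Function.update S d.snd (S d.fst)
    have hfalse : (univ.filter fun x => S' x = false) =
        (univ.filter fun x => S x = false).erase d.snd := by
      ext x
      by_cases hx : x = d.snd <;> simp [S', hx, hd₁]
    have hn' : (univ.filter fun x => S' x = false).card ≤ n := by
      rw [hfalse, card_erase_of_mem (by simpa using hd₂)]
      omega
    calc 0 < G.birthDeathMatrix f S S' * (G.birthDeathMatrix f ^ n) S' (fun _ => true) :=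
          mul_pos (birthDeathMatrix_update_pos hf S d.adj) (ih S' ⟨d.snd, by simp [S', hd₁]⟩ hn')
      _ ≤ ∑ T, G.birthDeathMatrix f S T * (G.birthDeathMatrix f ^ n) T (fun _ => true) :=
          single_le_sum
            (f := fun T => G.birthDeathMatrix f S T * (G.birthDeathMatrix f ^ n) T fun _ => true)
            (fun T _ => mul_nonneg (nonneg_of_mem_rowStochastic hP)
              (nonneg_of_mem_rowStochastic (pow_mem hP n))) (mem_univ S')
      _ = (G.birthDeathMatrix f ^ (n + 1)) S (fun _ => true) := by rw [pow_succ', mul_apply]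

theorem tendsto_pow_birthDeathMatrix_apply_allTrue [Nontrivial V] (hG : G.Preconnected)
    (hf : ∀ S v, 0 < f S v) (hfair : ∀ S v w, G.Adj v w → S v ≠ S w → f S v = f S w)
    (S : V → Bool) :
    Tendsto (fun n => (G.birthDeathMatrix f ^ n) S (fun _ => true)) atTop
      (nhds (G.redReproductiveValue S / G.redReproductiveValue (fun _ => true))) := by
  have hdeg (v : V) : 0 < G.degree v := hG.degree_pos_of_nontrivial v
  have hreach (T : V → Bool) : 0 < (G.birthDeathMatrix f ^ Fintype.card V) T (fun _ => true) ∨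
      0 < (G.birthDeathMatrix f ^ Fintype.card V) T (fun _ => false) := by
    by_cases hT : ∃ v, T v = true
    · exact .inl <| pow_birthDeathMatrix_apply_allTrue_pos hG hf hdeg _ T hT
        ((card_filter_le _ _).trans_eq card_univ)
    · have hF : ∀ v, T v = false := by simpa using hT
      obtain rfl : T = fun _ => false := funext hF
      simp [pow_row_eq_single_of_row_eq_single (birthDeathMatrix_row_const hf hdeg false)]
  have hφt : 0 < G.redReproductiveValue (fun _ => true) := by
    simp only [redReproductiveValue, if_true]
    exact sum_pos (fun v _ => by have := hdeg v; positivity) univ_nonempty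
  exact tendsto_pow_apply_of_mulVec_eq (birthDeathMatrix_mem_rowStochastic hf hdeg)
    (birthDeathMatrix_row_const hf hdeg true) (birthDeathMatrix_row_const hf hdeg false) hreach
    (birthDeathMatrix_mulVec_redReproductiveValue hf hdeg hfair) hφt.ne'
    (by simp [redReproductiveValue]) S

end SimpleGraph

/-- Let `G` be a finite connected bipartite graph with a proper
background 2-colouring `b`, undergoing the birth-death process with fecundity
advantage `r ≥ 1` and uniform offspring dispersal. For a set `M` of vertices
initially occupied by red (`true`) individuals, the fixation probability of red
(the limiting probability of the all-red state) equals
`(∑_{i∈M} 1/dᵢ)/(∑_{j∈V} 1/dⱼ)`; in particular it is independent of `r`. -/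
theorem stmt_15 {V : Type*} [Fintype V] [DecidableEq V]
    (G : SimpleGraph V) [DecidableRel G.Adj]
    (hconn : G.Connected) (hcard : 2 ≤ Fintype.card V)
    (b : V → Bool) (hproper : ∀ u v : V, G.Adj u v → b u ≠ b v)
    (r : ℝ) (hr : 1 ≤ r)
    (f : (V → Bool) → V → ℝ)
    (hf : ∀ S v, f S v = if S v = b v then r else 1)
    (P : Matrix (V → Bool) (V → Bool) ℝ)
    (hP : ∀ S T, P S T = ∑ v : V, ∑ w ∈ G.neighborFinset v,
      (f S v / ∑ u : V, f S u) * (1 / (G.degree v : ℝ)) *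
        (if T = Function.update S w (S v) then 1 else 0))
    (M : Finset V) :
    Tendsto (fun n : ℕ => (P ^ n) (fun v => decide (v ∈ M)) (fun _ => true))
      atTop
      (nhds ((∑ i ∈ M, (1 : ℝ) / (G.degree i : ℝ)) /
        (∑ j : V, (1 : ℝ) / (G.degree j : ℝ)))) := by
  obtain rfl : P = G.birthDeathMatrix f := funext fun S => funext (hP S)
  have : Nontrivial V := Fintype.one_lt_card_iff_nontrivial.mp hcard
  have hfpos (S : V → Bool) (v : V) : 0 < f S v := by
    rw [hf]
    split <;> linarith
  have hfair (S : V → Bool) (v w : V) (hvw : G.Adj v w) (hS : S v ≠ S w) : f S v = f S w := by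
    have hb := hproper v w hvw
    rw [hf, hf]
    revert hS hb
    cases S v <;> cases S w <;> cases b v <;> cases b w <;> simp
  convert G.tendsto_pow_birthDeathMatrix_apply_allTrue hconn.preconnected hfpos hfair
    (fun v => decide (v ∈ M)) using 3 <;>
    simp [SimpleGraph.redReproductiveValue, sum_ite_mem]
end
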